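/- Let $q$ be a prime power and let $H_q$ be the group of matrices $\begin{pmatrix} a & t \\ 0 & 1 \end{pmatrix}$ with $a \in \mathbf{F}_q^{\times}$ and $t \in \mathbf{F}_q$. Then, for $q \ge 2$, $c(H_q) = q + O(\tau(q-1))$ and $s(H_q) = q(2q-1) + O(\tau(q-1))$, where $\tau(q-1)$ is the number of positive divisors of $q-1$ and the implied constants are absolute. In particular $c(H_q) \sim q$ as $q \to +\infty$. -/

import Mathlib

open MeasureTheory ProbabilityTheory Pointwise ENNReal Matrix

namespace Chebotarev

variable {G : Type*} [Group G]

/-- The conjugacy classes of the tuple `x 0, …, x (n-1)` *generate* `G`: every choice of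
representatives from these conjugacy classes generates `G`. -/
def InvGen {n : ℕ} (x : Fin n → G) : Prop :=
  ∀ y : Fin n → G, (∀ i, IsConj (x i) (y i)) → Subgroup.closure (Set.range y) = ⊤

/-- The waiting time `τ = min {n ≥ 1 | the conjugacy classes of X₁, …, Xₙ generate G}`,
with value `∞` if no such `n` exists. -/
noncomputable def tau {Ω : Type*} (X : ℕ → Ω → G) (ω : Ω) : ℝ≥0∞ :=
  sInf {t : ℝ≥0∞ | ∃ n : ℕ, t = n ∧ 1 ≤ n ∧ InvGen (fun i : Fin n => X i ω)}

/-- `(Xₙ)` is a sequence of independent random variables, each uniformly distributed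
on the (finite) group `G`, on a probability space `(Ω, P)`. -/
def IsChebSetup {Ω : Type*} [MeasurableSpace Ω] (P : Measure Ω) (X : ℕ → Ω → G) : Prop :=
  IsProbabilityMeasure P ∧ (∀ n, @Measurable Ω G _ ⊤ (X n)) ∧
    iIndepFun (m := fun _ : ℕ => (⊤ : MeasurableSpace G)) X P ∧
    ∀ (n : ℕ) (g : G), P {ω | X n ω = g} = (Nat.card G : ℝ≥0∞)⁻¹

/-- The Chebotarev invariant `c(G) = E(τ)`. -/
noncomputable def cheb {Ω : Type*} [MeasurableSpace Ω] (P : Measure Ω) (X : ℕ → Ω → G) : ℝ :=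
  (∫⁻ ω, tau X ω ∂P).toReal

/-- The secondary Chebotarev invariant `s(G) = E(τ²)`. -/
noncomputable def scheb {Ω : Type*} [MeasurableSpace Ω] (P : Measure Ω) (X : ℕ → Ω → G) : ℝ :=
  (∫⁻ ω, (tau X ω) ^ 2 ∂P).toReal

/-- normalized density `ν(A) = |A| / |G|`. -/
noncomputable def nu (G : Type*) [Group G] (A : Set G) : ℝ :=
  (Nat.card A : ℝ) / (Nat.card G : ℝ)

/-- Conjugacy classes of subgroups of `G` (orbits of the conjugation action). -/
abbrev SubConjClass (G : Type*) [Group G] :=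
  Quotient (MulAction.orbitRel (ConjAct G) (Subgroup G))

/-- The conjugacy class of a subgroup. -/
def cls (H : Subgroup G) : SubConjClass G :=
  Quotient.mk (MulAction.orbitRel (ConjAct G) (Subgroup G)) H

/-- `max(G)`: the (finite) set of conjugacy classes of maximal proper subgroups of `G`. -/
noncomputable def maxClasses (G : Type*) [Group G] [Finite G] : Finset (SubConjClass G) :=
  haveI : Finite (Subgroup G) :=
    Finite.of_injective (fun H => (H : Set G)) SetLike.coe_injective
  Set.Finite.toFinset (Set.toFinite {c : SubConjClass G | ∃ H : Subgroup G, cls H = c ∧ IsCoatom H})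

/-- `𝓗♯`: the set of elements of `G` conjugate to an element of some subgroup in the
conjugacy class `c` of subgroups. -/
def sharp (c : SubConjClass G) : Set G :=
  {x : G | ∃ H : Subgroup G, cls H = c ∧ ∃ h ∈ H, IsConj h x}

end Chebotarev


/-- The group `H_q` of matrices `[[a, t], [0, 1]]` with `a ∈ F_q^×`, `t ∈ F_q`, realized as
the subgroup of `GL(2, F)` of matrices whose bottom row is `(0, 1)`. -/
def Hq (F : Type*) [Field F] : Subgroup (GL (Fin 2) F) where
  carrier := {M | (M : Matrix (Fin 2) (Fin 2) F) 1 0 = 0 ∧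
    (M : Matrix (Fin 2) (Fin 2) F) 1 1 = 1}
  one_mem' := by
    constructor <;> simp [Matrix.one_apply]
  mul_mem' := by
    rintro a b ⟨ha0, ha1⟩ ⟨hb0, hb1⟩
    constructor <;>
      simp [Units.val_mul, Matrix.mul_apply, Fin.sum_univ_two, ha0, ha1, hb0, hb1]
  inv_mem' := by
    rintro M ⟨h0, h1⟩
    have hMul : (↑M : Matrix (Fin 2) (Fin 2) F) * (↑M⁻¹ : Matrix (Fin 2) (Fin 2) F) = 1 :=
      Units.mul_inv M
    have e0 : ((↑M : Matrix (Fin 2) (Fin 2) F) * (↑M⁻¹ : Matrix (Fin 2) (Fin 2) F)) 1 0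
        = (1 : Matrix (Fin 2) (Fin 2) F) 1 0 := by rw [hMul]
    have e1 : ((↑M : Matrix (Fin 2) (Fin 2) F) * (↑M⁻¹ : Matrix (Fin 2) (Fin 2) F)) 1 1
        = (1 : Matrix (Fin 2) (Fin 2) F) 1 1 := by rw [hMul]
    rw [Matrix.mul_apply, Fin.sum_univ_two, h0, h1] at e0 e1
    simp only [Matrix.one_apply, zero_mul, one_mul, zero_add] at e0 e1
    constructor
    · simpa using e0
    · simpa using e1

/-!
The conjugacy classes of `x₁, …, xₙ ∈ H_q` fail to generate exactly when either no `xᵢ` is a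
nontrivial translation (then every `xᵢ` is conjugate into the diagonal torus), or the scales
`a(xᵢ) ∈ F_q^×` all lie in one proper subgroup `K`: a subgroup that surjects onto `F_q^×` and
contains one nontrivial translation contains all of them, by conjugation. Hence
`(1 - 1/q)ⁿ ≤ P(τ > n) ≤ (1 - 1/q)ⁿ + ∑_K [F_q^× : K]⁻ⁿ`, where `K` runs over the proper
subgroups of the cyclic group `F_q^×` (at most one for each divisor of `q - 1`), each of index at
least `2`. Summing against the weights `1` and `2n + 1` (`E τ = ∑ P(τ > n)`,
`E τ² = ∑ (2n + 1) P(τ > n)`) gives both estimates, and `c(H_q) ∼ q` follows from the bound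
`2(√m + 1)` on the number of divisors of `m`.
-/

open Finset in
theorem ENNReal.sum_range_two_mul_add_one (m : ℕ) :
    ∑ n ∈ range m, (2 * (n : ℝ≥0∞) + 1) = (m : ℝ≥0∞) ^ 2 := by
  induction m with
  | zero => simp
  | succ m ih => rw [sum_range_succ, ih]; push_cast; ring

section FirstSuccess

variable {p : ℕ → Prop} [DecidablePred p]

theorem sInf_natCast_setOf_of_exists (h : ∃ n, p n) :
    sInf {t : ℝ≥0∞ | ∃ n : ℕ, t = n ∧ p n} = Nat.find h := by
  refine le_antisymm (sInf_le ⟨_, rfl, Nat.find_spec h⟩) (le_sInf ?_)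
  rintro _ ⟨n, rfl, hn⟩
  exact_mod_cast Nat.find_min' h hn

theorem tsum_ite_eq_sum_range_find (hp : Monotone p) (h : ∃ n, p n) (f : ℕ → ℝ≥0∞) :
    ∑' n, (if p n then 0 else f n) = ∑ n ∈ Finset.range (Nat.find h), f n := by
  rw [tsum_eq_sum (s := Finset.range (Nat.find h))]
  · exact Finset.sum_congr rfl fun n hn => if_neg (Nat.find_min h (Finset.mem_range.1 hn))
  · intro n hn
    exact if_pos (hp (not_lt.1 (Finset.mem_range.not.1 hn)) (Nat.find_spec h))

theorem sInf_natCast_setOf_eq_tsum (hp : Monotone p) :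
    sInf {t : ℝ≥0∞ | ∃ n : ℕ, t = n ∧ p n} = ∑' n, if p n then 0 else 1 := by
  by_cases h : ∃ n, p n
  · simp [sInf_natCast_setOf_of_exists h, tsum_ite_eq_sum_range_find hp h]
  · push Not at h
    simp [h]

theorem sq_sInf_natCast_setOf_eq_tsum (hp : Monotone p) :
    sInf {t : ℝ≥0∞ | ∃ n : ℕ, t = n ∧ p n} ^ 2 = ∑' n, if p n then 0 else 2 * (n : ℝ≥0∞) + 1 := by
  by_cases h : ∃ n, p n
  · rw [sInf_natCast_setOf_of_exists h, tsum_ite_eq_sum_range_find hp h,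
      ENNReal.sum_range_two_mul_add_one]
  · push Not at h
    have hS : {t : ℝ≥0∞ | ∃ n : ℕ, t = n ∧ p n} = ∅ := by simp [h]
    rw [hS, sInf_empty, ENNReal.top_pow two_ne_zero, eq_comm, ← top_le_iff]
    calc ⊤ = ∑' _ : ℕ, (1 : ℝ≥0∞) := (ENNReal.tsum_const_eq_top_of_ne_zero one_ne_zero).symm
      _ ≤ _ := ENNReal.tsum_le_tsum fun n => by simp [h]

end FirstSuccess

theorem MeasureTheory.lintegral_tsum_mul_indicator_one {Ω : Type*} [MeasurableSpace Ω]
    {μ : Measure Ω} {s : ℕ → Set Ω} (hs : ∀ n, MeasurableSet (s n)) (c : ℕ → ℝ≥0∞) :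
    ∫⁻ ω, ∑' n, c n * (s n).indicator 1 ω ∂μ = ∑' n, c n * μ (s n) := by
  rw [lintegral_tsum fun n => ((measurable_one.indicator (hs n)).const_mul _).aemeasurable]
  simp_rw [lintegral_const_mul _ (measurable_one.indicator (hs _)), lintegral_indicator_one (hs _)]

theorem ENNReal.tsum_ofReal_pow {ξ : ℝ} (h0 : 0 ≤ ξ) (h1 : ξ < 1) :
    ∑' n : ℕ, ENNReal.ofReal ξ ^ n = ENNReal.ofReal (1 - ξ)⁻¹ := by
  rw [ENNReal.tsum_geometric, ENNReal.ofReal_inv_of_pos (by linarith), ENNReal.ofReal_sub _ h0,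
    ENNReal.ofReal_one]

theorem ENNReal.tsum_two_mul_add_one_mul_ofReal_pow {ξ : ℝ} (h0 : 0 ≤ ξ) (h1 : ξ < 1) :
    ∑' n : ℕ, (2 * (n : ℝ≥0∞) + 1) * ENNReal.ofReal ξ ^ n =
      ENNReal.ofReal ((1 + ξ) / (1 - ξ) ^ 2) := by
  have hsum : HasSum (fun n : ℕ => (2 * (n : ℝ) + 1) * ξ ^ n) ((1 + ξ) / (1 - ξ) ^ 2) := by
    have hξ : ‖ξ‖ < 1 := by rwa [Real.norm_of_nonneg h0]
    have h := ((hasSum_coe_mul_geometric_of_norm_lt_one hξ).mul_left 2).add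
      (hasSum_geometric_of_lt_one h0 h1)
    have hv : 2 * (ξ / (1 - ξ) ^ 2) + (1 - ξ)⁻¹ = (1 + ξ) / (1 - ξ) ^ 2 := by
      field_simp [sub_ne_zero.2 h1.ne']
      ring
    have hf : (fun n : ℕ => (2 * (n : ℝ) + 1) * ξ ^ n) = fun n : ℕ => 2 * (n * ξ ^ n) + ξ ^ n := by
      ext n
      ring
    rwa [hf, ← hv]
  rw [← hsum.tsum_eq, ENNReal.ofReal_tsum_of_nonneg (fun n => by positivity) hsum.summable]
  refine tsum_congr fun n => ?_
  rw [ENNReal.ofReal_mul (by positivity), ENNReal.ofReal_pow h0]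
  norm_cast

theorem inv_one_sub_le_two {ξ : ℝ} (hξ : ξ ≤ 1 / 2) : (1 - ξ)⁻¹ ≤ 2 := by
  rw [inv_le_comm₀ (by linarith) two_pos]
  linarith

theorem one_add_div_one_sub_sq_le_six {ξ : ℝ} (hξ : ξ ≤ 1 / 2) :
    (1 + ξ) / (1 - ξ) ^ 2 ≤ 6 := by
  rw [div_le_iff₀ (by nlinarith)]
  nlinarith

theorem ENNReal.abs_toReal_sub_le {T : ℝ≥0∞} {A B : ℝ} {k : ℕ} (hA : 0 ≤ A) (hB : 0 ≤ B)
    (hlow : ENNReal.ofReal A ≤ T) (hup : T ≤ ENNReal.ofReal A + k * ENNReal.ofReal B) :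
    |T.toReal - A| ≤ B * k := by
  rw [← ENNReal.ofReal_natCast, ← ENNReal.ofReal_mul (by positivity), mul_comm,
    ← ENNReal.ofReal_add hA (by positivity)] at hup
  have hT : T ≠ ⊤ := ne_top_of_le_ne_top ENNReal.ofReal_ne_top hup
  have h1 := (ENNReal.ofReal_le_iff_le_toReal hT).1 hlow
  have h2 := ENNReal.toReal_le_of_le_ofReal (by positivity) hup
  rw [abs_le]
  constructor <;> linarith

theorem one_sub_inv_natCast_mem_Ico {n : ℕ} (hn : 0 < n) : 1 - (n : ℝ)⁻¹ ∈ Set.Ico 0 1 := by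
  have h1 : (1 : ℝ) ≤ n := by exact_mod_cast hn
  exact ⟨sub_nonneg.2 (inv_le_one_of_one_le₀ h1), sub_lt_self _ (by positivity)⟩

theorem Nat.card_divisors_le_two_mul_sqrt_add_one (m : ℕ) :
    m.divisors.card ≤ 2 * (m.sqrt + 1) := by
  have hsub : m.divisors ⊆
      Finset.range (m.sqrt + 1) ∪ (Finset.range (m.sqrt + 1)).image (m / ·) := by
    intro d hd
    obtain ⟨hdvd, hm⟩ := Nat.mem_divisors.1 hd
    rw [Finset.mem_union, Finset.mem_range, Finset.mem_image]
    by_cases hds : d ≤ m.sqrt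
    · exact .inl (Nat.lt_succ_of_le hds)
    -- a divisor `d > √m` is recovered from its cofactor `m / d < √m + 1`
    refine .inr ⟨m / d, ?_, Nat.div_div_self hdvd hm⟩
    rw [Finset.mem_range, Nat.div_lt_iff_lt_mul (by omega)]
    calc m < (m.sqrt + 1) * (m.sqrt + 1) := Nat.lt_succ_sqrt m
      _ ≤ (m.sqrt + 1) * d := Nat.mul_le_mul_left _ (by omega)
  calc m.divisors.card ≤ _ := Finset.card_le_card hsub
    _ ≤ _ := Finset.card_union_le _ _
    _ ≤ (m.sqrt + 1) + (m.sqrt + 1) := by grw [Finset.card_image_le, Finset.card_range]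
    _ = _ := by ring

theorem Nat.sq_card_divisors_le (m : ℕ) : m.divisors.card ^ 2 ≤ 8 * (m + 1) := by
  have h := Nat.card_divisors_le_two_mul_sqrt_add_one m
  have hs := Nat.sqrt_le' m
  calc m.divisors.card ^ 2 ≤ (2 * (m.sqrt + 1)) ^ 2 := Nat.pow_le_pow_left h 2
    _ ≤ 8 * (m + 1) := by
      zify at hs ⊢
      nlinarith [sq_nonneg ((m.sqrt : ℤ) - 1)]

theorem abs_div_sub_one_lt {c q t ε : ℝ} (hε : 0 < ε) (hq : 32 / ε ^ 2 < q)
    (ht : t ^ 2 ≤ 8 * q) (hc : |c - q| ≤ 2 * t) : |c / q - 1| < ε := by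
  have hq0 : 0 < q := lt_trans (by positivity) hq
  have hεq : 32 < ε ^ 2 * q := by rwa [div_lt_iff₀' (by positivity)] at hq
  rw [← div_self hq0.ne', ← sub_div, abs_div, abs_of_pos hq0, div_lt_iff₀ hq0]
  by_contra! h
  have h1 := pow_le_pow_left₀ (by positivity) h 2
  have h2 := pow_le_pow_left₀ (abs_nonneg _) hc 2
  nlinarith

theorem IsCyclic.ker_powMonoidHom_card {G : Type*} [CommGroup G] [IsCyclic G] [Finite G]
    (K : Subgroup G) : (powMonoidHom (Nat.card K) : G →* G).ker = K := by
  refine (Subgroup.eq_of_le_of_card_ge (fun g hg => ?_) ?_).symm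
  · rw [MonoidHom.mem_ker, powMonoidHom_apply]
    exact (SubgroupClass.coe_pow (⟨g, hg⟩ : K) _).symm.trans (congrArg Subtype.val pow_card_eq_one')
  · rw [IsCyclic.card_powMonoidHom_ker, Nat.gcd_eq_right (Subgroup.card_subgroup_dvd_card K)]

theorem IsCyclic.card_finset_subgroup_le {G : Type*} [CommGroup G] [IsCyclic G] [Finite G]
    (s : Finset (Subgroup G)) : s.card ≤ (Nat.card G).divisors.card := by
  refine Finset.card_le_card_of_injOn (fun K => Nat.card K) (fun K _ => ?_) fun K _ L _ h => ?_
  · exact Nat.mem_divisors.2 ⟨Subgroup.card_subgroup_dvd_card K, Nat.card_pos.ne'⟩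
  · rw [← IsCyclic.ker_powMonoidHom_card K, ← IsCyclic.ker_powMonoidHom_card L]
    exact congrArg (fun n => (powMonoidHom n : G →* G).ker) h

namespace Chebotarev

theorem IsChebSetup.measurableSet_preimage {G Ω : Type*} [MeasurableSpace Ω] {P : Measure Ω}
    {X : ℕ → Ω → G} (h : IsChebSetup P X) (i : ℕ) (A : Set G) : MeasurableSet (X i ⁻¹' A) :=
  h.2.1 i MeasurableSpace.measurableSet_top

variable {G : Type*} [Group G]

theorem nu_compl [Finite G] (A : Set G) : nu G Aᶜ = 1 - nu G A := by
  have hA := Set.ncard_add_ncard_compl A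
  have hG : (Nat.card G : ℝ) ≠ 0 := by exact_mod_cast Nat.card_pos.ne'
  rw [nu, nu, Nat.card_coe_set_eq, Nat.card_coe_set_eq, eq_sub_iff_add_eq, ← add_div,
    div_eq_one_iff_eq hG]
  exact_mod_cast by omega

theorem nu_subgroup [Finite G] (H : Subgroup G) : nu G H = (H.index : ℝ)⁻¹ := by
  have hH : (Nat.card H : ℝ) ≠ 0 := by exact_mod_cast Nat.card_pos.ne'
  change (Nat.card H : ℝ) / Nat.card G = _
  rw [← H.card_mul_index, Nat.cast_mul, div_mul_cancel_left₀ hH]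

theorem InvGen.of_le {x : ℕ → G} {m n : ℕ} (hmn : m ≤ n) (h : InvGen fun i : Fin m => x i) :
    InvGen fun i : Fin n => x i := by
  intro y hy
  rw [eq_top_iff, ← h (fun i => y (Fin.castLE hmn i)) fun i => hy (Fin.castLE hmn i)]
  exact Subgroup.closure_mono (Set.range_comp_subset_range _ _)

theorem not_invGen_fin_zero [Nontrivial G] (x : Fin 0 → G) : ¬ InvGen x := fun h =>
  (bot_ne_top (α := Subgroup G)) (by simpa using h x fun _ => .refl _)

variable {Ω : Type*}

theorem tau_eq_sInf [Nontrivial G] (X : ℕ → Ω → G) (ω : Ω) :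
    tau X ω = sInf {t : ℝ≥0∞ | ∃ n : ℕ, t = n ∧ InvGen fun i : Fin n => X i ω} := by
  refine congrArg sInf (Set.ext fun t => ⟨fun ⟨n, ht, _, h⟩ => ⟨n, ht, h⟩, fun ⟨n, ht, h⟩ => ?_⟩)
  refine ⟨n, ht, Nat.one_le_iff_ne_zero.2 ?_, h⟩
  rintro rfl
  exact not_invGen_fin_zero _ h

/-- The event `τ > n`. -/
def nonGenEvent (X : ℕ → Ω → G) (n : ℕ) : Set Ω :=
  {ω | ¬ InvGen fun i : Fin n => X i ω}

theorem tau_eq_tsum_indicator [Nontrivial G] (X : ℕ → Ω → G) (ω : Ω) :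
    tau X ω = ∑' n, (nonGenEvent X n).indicator 1 ω := by
  classical
  rw [tau_eq_sInf, sInf_natCast_setOf_eq_tsum fun _ _ hmn h => InvGen.of_le (x := (X · ω)) hmn h]
  refine tsum_congr fun n => ?_
  by_cases hn : InvGen fun i : Fin n => X i ω <;> simp [Set.indicator, nonGenEvent, hn]

theorem sq_tau_eq_tsum_indicator [Nontrivial G] (X : ℕ → Ω → G) (ω : Ω) :
    tau X ω ^ 2 = ∑' n : ℕ, (2 * (n : ℝ≥0∞) + 1) * (nonGenEvent X n).indicator 1 ω := by
  classical
  rw [tau_eq_sInf, sq_sInf_natCast_setOf_eq_tsum fun _ _ hmn h => InvGen.of_le (x := (X · ω)) hmn h]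
  refine tsum_congr fun n => ?_
  by_cases hn : InvGen fun i : Fin n => X i ω <;> simp [Set.indicator, nonGenEvent, hn]

variable [MeasurableSpace Ω] {P : Measure Ω} {X : ℕ → Ω → G}

theorem IsChebSetup.measurableSet_nonGenEvent [Finite G] (h : IsChebSetup P X) (n : ℕ) :
    MeasurableSet (nonGenEvent X n) := by
  have : nonGenEvent X n = ⋃ x ∈ {x : Fin n → G | ¬ InvGen x}, ⋂ i : Fin n, X i ⁻¹' {x i} := by
    ext ω
    simp [nonGenEvent, ← funext_iff]
  rw [this]
  exact .biUnion (Set.to_countable _) fun x _ => .iInter fun i => h.measurableSet_preimage i _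

theorem IsChebSetup.lintegral_tau [Finite G] [Nontrivial G] (h : IsChebSetup P X) :
    ∫⁻ ω, tau X ω ∂P = ∑' n, P (nonGenEvent X n) := by
  simp_rw [tau_eq_tsum_indicator]
  simpa using lintegral_tsum_mul_indicator_one (μ := P) h.measurableSet_nonGenEvent 1

theorem IsChebSetup.lintegral_sq_tau [Finite G] [Nontrivial G] (h : IsChebSetup P X) :
    ∫⁻ ω, tau X ω ^ 2 ∂P = ∑' n : ℕ, (2 * (n : ℝ≥0∞) + 1) * P (nonGenEvent X n) := by
  simp_rw [sq_tau_eq_tsum_indicator]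
  exact lintegral_tsum_mul_indicator_one h.measurableSet_nonGenEvent _

theorem IsChebSetup.measure_preimage [Finite G] (h : IsChebSetup P X) (i : ℕ) (A : Set G) :
    P (X i ⁻¹' A) = ENNReal.ofReal (nu G A) := by
  have := Fintype.ofFinite G
  classical
  rw [← A.coe_toFinset, ← sum_measure_preimage_singleton _ fun g _ => h.measurableSet_preimage i _]
  simp only [Set.preimage, Set.mem_singleton_iff, h.2.2.2, Finset.sum_const, nsmul_eq_mul]
  rw [nu, ENNReal.ofReal_div_of_pos (by exact_mod_cast Nat.card_pos), div_eq_mul_inv]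
  simp [Nat.card_eq_fintype_card, Set.toFinset_card]

theorem IsChebSetup.measure_forall_lt_mem [Finite G] (h : IsChebSetup P X) (n : ℕ) (A : Set G) :
    P {ω | ∀ i < n, X i ω ∈ A} = ENNReal.ofReal (nu G A) ^ n := by
  have : {ω | ∀ i < n, X i ω ∈ A} = ⋂ i ∈ Finset.range n, X i ⁻¹' A := by
    ext ω
    simp
  rw [this, h.2.2.1.measure_inter_preimage_eq_mul _ fun i _ => MeasurableSpace.measurableSet_top]
  simp [h.measure_preimage]

end Chebotarev

open Chebotarev

namespace Hq

variable {F : Type*} [Field F]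

def mk (a : Fˣ) (t : F) : Hq F :=
  ⟨.mkOfDetNeZero !![(a : F), t; 0, 1] (by simp [Matrix.det_fin_two_of]), rfl, rfl⟩

theorem coe_mk (a : Fˣ) (t : F) :
    ((mk a t : GL (Fin 2) F) : Matrix (Fin 2) (Fin 2) F) = !![(a : F), t; 0, 1] :=
  rfl

theorem mk_mul (a b : Fˣ) (t s : F) : mk a t * mk b s = mk (a * b) (a * s + t) :=
  Subtype.ext <| Units.ext <| by simp [coe_mk]

theorem mk_one : mk (1 : Fˣ) (0 : F) = 1 :=
  Subtype.ext <| Units.ext <| by simp [coe_mk, Matrix.one_fin_two]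

theorem mk_inv (a : Fˣ) (t : F) : (mk a t)⁻¹ = mk a⁻¹ (-(a⁻¹ : Fˣ) * t) :=
  inv_eq_of_mul_eq_one_right <| by simp [mk_mul, ← mk_one]

-- `det [[a, t], [0, 1]] = a`, so this is the homomorphism `g ↦ a`.
def scale : Hq F →* Fˣ :=
  Matrix.GeneralLinearGroup.det.comp (Hq F).subtype

@[simp]
theorem scale_mk (a : Fˣ) (t : F) : scale (mk a t) = a :=
  Units.ext <| by simp [scale, coe_mk, Matrix.det_fin_two_of]

def transl (g : Hq F) : F :=
  ((g : GL (Fin 2) F) : Matrix (Fin 2) (Fin 2) F) 0 1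

@[simp]
theorem transl_mk (a : Fˣ) (t : F) : transl (mk a t) = t :=
  rfl

theorem mk_inj {a b : Fˣ} {t s : F} : mk a t = mk b s ↔ a = b ∧ t = s :=
  ⟨fun h => ⟨by simpa using congrArg scale h, by simpa using congrArg transl h⟩,
    fun ⟨ha, ht⟩ => ha ▸ ht ▸ rfl⟩

theorem exists_eq_mk (g : Hq F) : ∃ a t, g = mk a t := by
  obtain ⟨h10, h11⟩ := g.2
  refine ⟨scale g, transl g, Subtype.ext <| Units.ext ?_⟩
  have h00 : ((scale g : Fˣ) : F) = ((g : GL (Fin 2) F) : Matrix (Fin 2) (Fin 2) F) 0 0 := by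
    simp [scale, Matrix.det_fin_two, h10, h11]
  ext i j
  fin_cases i <;> fin_cases j <;> simp [coe_mk, transl, h00, h10, h11]

theorem bijective_mk : Function.Bijective fun p : Fˣ × F => mk p.1 p.2 :=
  ⟨fun _ _ h => Prod.ext (mk_inj.1 h).1 (mk_inj.1 h).2,
    fun g => (exists_eq_mk g).elim fun a ⟨t, h⟩ => ⟨(a, t), h.symm⟩⟩

theorem scale_surjective : Function.Surjective (scale (F := F)) :=
  fun a => ⟨mk a 0, scale_mk a 0⟩

instance [Finite F] : Finite (Hq F) :=
  .of_surjective _ bijective_mk.2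

instance : Nontrivial (Hq F) :=
  ⟨⟨mk 1 1, 1, by simp [← mk_one, mk_inj]⟩⟩

theorem card_eq_card_units_mul_card : Nat.card (Hq F) = Nat.card Fˣ * Nat.card F := by
  rw [← Nat.card_prod]
  exact (Nat.card_eq_of_bijective _ bijective_mk).symm

theorem mul_mk_one_mul_inv (g : Hq F) (t : F) : g * mk 1 t * g⁻¹ = mk 1 (scale g * t) := by
  obtain ⟨a, s, rfl⟩ := exists_eq_mk g
  simp only [mk_inv, mk_mul, scale_mk, mk_inj, mul_one, Units.val_inv_eq_inv_val]
  constructor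
  · group
  · field_simp
    ring

theorem isConj_mk_zero {a : Fˣ} (ha : a ≠ 1) (t : F) : IsConj (mk a t) (mk a 0) := by
  have : (a : F) - 1 ≠ 0 := sub_ne_zero.2 (Units.val_eq_one.not.2 ha)
  refine isConj_iff.2 ⟨mk 1 (t / (a - 1)), ?_⟩
  simp only [mk_inv, mk_mul, mk_inj, Units.val_inv_eq_inv_val, Units.val_mul, Units.val_one]
  constructor
  · group
  · field_simp
    ring

def nontrivialTranslations (F : Type*) [Field F] : Set (Hq F) :=
  {g | scale g = 1 ∧ g ≠ 1}

theorem _root_.IsConj.mem_nontrivialTranslations_iff {g h : Hq F} (hgh : IsConj g h) :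
    g ∈ nontrivialTranslations F ↔ h ∈ nontrivialTranslations F := by
  simp only [nontrivialTranslations, Set.mem_ofPred_eq, isConj_iff_eq.1 (scale.map_isConj hgh)]
  exact and_congr_right fun _ => not_congr
    ⟨fun h1 => isConj_one_right.1 (h1 ▸ hgh), fun h1 => isConj_one_left.1 (h1 ▸ hgh)⟩

theorem isConj_mk_scale_zero {g : Hq F} (hg : g ∉ nontrivialTranslations F) :
    IsConj g (mk (scale g) 0) := by
  obtain ⟨a, t, rfl⟩ := exists_eq_mk g
  rw [scale_mk]
  by_cases ha : a = 1
  · subst ha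
    have : mk 1 t = 1 := by simpa [nontrivialTranslations] using hg
    rw [this, mk_one]
  · exact isConj_mk_zero ha t

def diag : Fˣ →* Hq F where
  toFun a := mk a 0
  map_one' := mk_one
  map_mul' a b := by simp [mk_mul]

theorem diag_range_ne_top : (diag (F := F)).range ≠ ⊤ := fun h => by
  obtain ⟨a, ha⟩ := (h ▸ Subgroup.mem_top (mk 1 1) : mk (1 : Fˣ) (1 : F) ∈ diag.range)
  simp [diag, mk_inj] at ha

theorem not_invGen_of_forall_notMem {n : ℕ} {x : Fin n → Hq F}
    (hx : ∀ i, x i ∉ nontrivialTranslations F) : ¬ InvGen x := fun h => by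
  refine diag_range_ne_top (F := F) (top_le_iff.1 ?_)
  rw [← h _ fun i => isConj_mk_scale_zero (hx i), Subgroup.closure_le]
  rintro _ ⟨i, rfl⟩
  exact ⟨scale (x i), rfl⟩

theorem eq_top_of_map_scale_eq_top {M : Subgroup (Hq F)} {g : Hq F} (hgM : g ∈ M)
    (hg : g ∈ nontrivialTranslations F) (hM : M.map scale = ⊤) : M = ⊤ := by
  obtain ⟨a, t, rfl⟩ := exists_eq_mk g
  obtain ⟨ha, hne⟩ := hg
  obtain rfl : a = 1 := by simpa using ha
  have ht : t ≠ 0 := fun ht => hne (by rw [ht, mk_one])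
  have hlift : ∀ b : Fˣ, ∃ m ∈ M, scale m = b := fun b => hM.ge (Subgroup.mem_top b)
  -- conjugating `mk 1 t` by an element of scale `s / t` gives `mk 1 s`
  have htransl : ∀ s : F, mk 1 s ∈ M := by
    intro s
    by_cases hs : s = 0
    · simp [hs, mk_one, M.one_mem]
    obtain ⟨m, hm, hmu⟩ := hlift (Units.mk0 (s / t) (div_ne_zero hs ht))
    have := M.mul_mem (M.mul_mem hm hgM) (M.inv_mem hm)
    rwa [mul_mk_one_mul_inv, hmu, Units.val_mk0, div_mul_cancel₀ s ht] at this
  refine eq_top_iff.2 fun h _ => ?_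
  obtain ⟨b, r, rfl⟩ := exists_eq_mk h
  obtain ⟨m, hm, hmb⟩ := hlift b
  obtain ⟨c, r', rfl⟩ := exists_eq_mk m
  obtain rfl : c = b := by simpa using hmb
  have : mk c r = mk 1 (r - r') * mk c r' := by simp [mk_mul]
  rw [this]
  exact M.mul_mem (htransl _) hm

theorem forall_notMem_or_exists_of_not_invGen {n : ℕ} {x : Fin n → Hq F} (h : ¬ InvGen x) :
    (∀ i, x i ∉ nontrivialTranslations F) ∨
      ∃ K : Subgroup Fˣ, K ≠ ⊤ ∧ ∀ i, scale (x i) ∈ K := by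
  simp only [InvGen, not_forall] at h
  obtain ⟨y, hxy, hM⟩ := h
  have hy : ∀ i, y i ∈ Subgroup.closure (Set.range y) := fun i => Subgroup.subset_closure ⟨i, rfl⟩
  by_cases hK : (Subgroup.closure (Set.range y)).map scale = ⊤
  · exact .inl fun i hi =>
      hM (eq_top_of_map_scale_eq_top (hy i) ((hxy i).mem_nontrivialTranslations_iff.1 hi) hK)
  · refine .inr ⟨_, hK, fun i => ?_⟩
    rw [isConj_iff_eq.1 (scale.map_isConj (hxy i))]
    exact ⟨y i, hy i, rfl⟩

section Finite

variable [Fintype F]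

theorem nu_nontrivialTranslations :
    nu (Hq F) (nontrivialTranslations F) = (Fintype.card F : ℝ)⁻¹ := by
  have : nontrivialTranslations F = Set.range fun u : Fˣ => mk 1 (u : F) := by
    ext g
    obtain ⟨a, t, rfl⟩ := exists_eq_mk g
    simp only [nontrivialTranslations, Set.mem_ofPred_eq, scale_mk, ← mk_one, ne_eq, mk_inj,
      Set.mem_range]
    constructor
    · rintro ⟨rfl, ht⟩
      exact ⟨Units.mk0 t fun h => ht ⟨rfl, h⟩, rfl, rfl⟩
    · rintro ⟨u, rfl, rfl⟩
      exact ⟨rfl, fun h => u.ne_zero h.2⟩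
  have hF : (Nat.card Fˣ : ℝ) ≠ 0 := by exact_mod_cast Nat.card_pos.ne'
  rw [nu, this, Nat.card_range_of_injective fun u v h => Units.ext (mk_inj.1 h).2, card_eq_card_units_mul_card,
    Nat.card_eq_fintype_card (α := F), Nat.cast_mul, div_mul_cancel_left₀ hF]

theorem nu_preimage_scale (K : Subgroup Fˣ) : nu (Hq F) (scale ⁻¹' K) = (K.index : ℝ)⁻¹ := by
  rw [← K.index_comap_of_surjective scale_surjective, ← nu_subgroup]
  rfl

variable {Ω : Type*} [MeasurableSpace Ω] {P : Measure Ω} {X : ℕ → Ω → Hq F}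

theorem ofReal_pow_le_measure_nonGenEvent (hX : IsChebSetup P X) (n : ℕ) :
    ENNReal.ofReal (1 - (Fintype.card F : ℝ)⁻¹) ^ n ≤ P (nonGenEvent X n) := by
  rw [← nu_nontrivialTranslations, ← nu_compl, ← hX.measure_forall_lt_mem]
  exact measure_mono fun ω hω => not_invGen_of_forall_notMem fun i => hω i i.2

theorem measure_nonGenEvent_le (hX : IsChebSetup P X) {s : Finset (Subgroup Fˣ)}
    (hs : ∀ K : Subgroup Fˣ, K ≠ ⊤ → K ∈ s) (n : ℕ) :
    P (nonGenEvent X n) ≤ ENNReal.ofReal (1 - (Fintype.card F : ℝ)⁻¹) ^ n +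
      ∑ K ∈ s, ENNReal.ofReal (K.index : ℝ)⁻¹ ^ n := by
  have hsub : nonGenEvent X n ⊆ {ω | ∀ i < n, X i ω ∈ (nontrivialTranslations F)ᶜ} ∪
      ⋃ K ∈ s, {ω | ∀ i < n, X i ω ∈ scale ⁻¹' (K : Set Fˣ)} := by
    intro ω hω
    rcases forall_notMem_or_exists_of_not_invGen hω with h | ⟨K, hK, h⟩
    · exact .inl fun i hi => h ⟨i, hi⟩
    · exact .inr (Set.mem_biUnion (hs K hK) fun i hi => h ⟨i, hi⟩)
  refine (measure_mono hsub).trans <| (measure_union_le _ _).trans <|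
    add_le_add ?_ ((measure_biUnion_finset_le _ _).trans ?_)
  · rw [hX.measure_forall_lt_mem, nu_compl, nu_nontrivialTranslations]
  · simp_rw [hX.measure_forall_lt_mem, nu_preimage_scale]
    rfl

theorem tsum_mul_measure_nonGenEvent_le (hX : IsChebSetup P X) (w : ℕ → ℝ≥0∞) {B : ℝ≥0∞}
    (hB : ∀ ξ : ℝ, 0 ≤ ξ → ξ ≤ 1 / 2 → ∑' n, w n * ENNReal.ofReal ξ ^ n ≤ B) :
    ∑' n, w n * P (nonGenEvent X n) ≤
      ∑' n, w n * ENNReal.ofReal (1 - (Fintype.card F : ℝ)⁻¹) ^ n +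
        (Fintype.card F - 1).divisors.card * B := by
  set s := (Set.toFinite {K : Subgroup Fˣ | K ≠ ⊤}).toFinset
  have hs : ∀ K, K ∈ s ↔ K ≠ ⊤ := fun K => Set.Finite.mem_toFinset _
  have hcard : s.card ≤ (Fintype.card F - 1).divisors.card := by
    simpa [Nat.card_units] using IsCyclic.card_finset_subgroup_le s
  calc ∑' n, w n * P (nonGenEvent X n)
      ≤ ∑' n, (w n * ENNReal.ofReal (1 - (Fintype.card F : ℝ)⁻¹) ^ n +
          ∑ K ∈ s, w n * ENNReal.ofReal (K.index : ℝ)⁻¹ ^ n) := by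
        refine ENNReal.tsum_le_tsum fun n => ?_
        rw [← Finset.mul_sum, ← mul_add]
        gcongr
        exact measure_nonGenEvent_le hX (fun K => (hs K).2) n
    _ = ∑' n, w n * ENNReal.ofReal (1 - (Fintype.card F : ℝ)⁻¹) ^ n +
          ∑ K ∈ s, ∑' n, w n * ENNReal.ofReal (K.index : ℝ)⁻¹ ^ n := by
        rw [ENNReal.tsum_add, Summable.tsum_finsetSum fun _ _ => ENNReal.summable]
    _ ≤ ∑' n, w n * ENNReal.ofReal (1 - (Fintype.card F : ℝ)⁻¹) ^ n + s.card * B := by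
        grw [Finset.sum_le_card_nsmul s _ B fun K hK => hB _ (by positivity) ?_, nsmul_eq_mul]
        have : (2 : ℝ) ≤ K.index := by exact_mod_cast Subgroup.one_lt_index_of_ne_top ((hs K).1 hK)
        rw [inv_le_comm₀ (by positivity) (by norm_num)]
        norm_num [this]
    _ ≤ _ := by gcongr

theorem abs_cheb_sub_card_le (hX : IsChebSetup P X) :
    |cheb P X - Fintype.card F| ≤ 2 * (Fintype.card F - 1).divisors.card := by
  obtain ⟨h0, h1⟩ := one_sub_inv_natCast_mem_Ico (Fintype.card_pos (α := F))
  have hgeom : ∑' n : ℕ, ENNReal.ofReal (1 - (Fintype.card F : ℝ)⁻¹) ^ n =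
      ENNReal.ofReal (Fintype.card F) := by
    rw [ENNReal.tsum_ofReal_pow h0 h1]
    simp
  have hup := tsum_mul_measure_nonGenEvent_le hX 1 (B := ENNReal.ofReal 2) fun ξ hξ0 hξ => by
    simpa [ENNReal.tsum_ofReal_pow hξ0 (by linarith)] using
      ENNReal.ofReal_le_ofReal (inv_one_sub_le_two hξ)
  simp only [Pi.one_apply, one_mul, hgeom] at hup
  rw [cheb, hX.lintegral_tau]
  refine ENNReal.abs_toReal_sub_le (by positivity) zero_le_two ?_ hup
  exact hgeom ▸ ENNReal.tsum_le_tsum (ofReal_pow_le_measure_nonGenEvent hX)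

theorem abs_scheb_sub_le (hX : IsChebSetup P X) :
    |scheb P X - Fintype.card F * (2 * Fintype.card F - 1)| ≤
      6 * (Fintype.card F - 1).divisors.card := by
  obtain ⟨h0, h1⟩ := one_sub_inv_natCast_mem_Ico (Fintype.card_pos (α := F))
  have hq : (Fintype.card F : ℝ) ≠ 0 := by exact_mod_cast Fintype.card_ne_zero
  have hq1 : (1 : ℝ) ≤ Fintype.card F := by exact_mod_cast Fintype.card_pos
  have hgeom : ∑' n : ℕ, (2 * (n : ℝ≥0∞) + 1) * ENNReal.ofReal (1 - (Fintype.card F : ℝ)⁻¹) ^ n =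
      ENNReal.ofReal (Fintype.card F * (2 * Fintype.card F - 1)) := by
    rw [ENNReal.tsum_two_mul_add_one_mul_ofReal_pow h0 h1]
    congr 1
    field_simp
    ring
  have hup := tsum_mul_measure_nonGenEvent_le hX (fun n => 2 * (n : ℝ≥0∞) + 1)
    (B := ENNReal.ofReal 6) fun ξ hξ0 hξ => by
      rw [ENNReal.tsum_two_mul_add_one_mul_ofReal_pow hξ0 (by linarith)]
      exact ENNReal.ofReal_le_ofReal (one_add_div_one_sub_sq_le_six hξ)
  rw [hgeom] at hup
  rw [scheb, hX.lintegral_sq_tau]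
  refine ENNReal.abs_toReal_sub_le (by nlinarith) (by norm_num) ?_ hup
  exact hgeom ▸ ENNReal.tsum_le_tsum fun n =>
    mul_le_mul_right (ofReal_pow_le_measure_nonGenEvent hX n) _

end Finite

end Hq

/-- **Proposition (asymptotics of the Chebotarev invariants of `H_q`).** There is an absolute
constant `C` such that for every finite field `F` with `q ≥ 2` elements and every independent
uniform sequence on `H_q`: `|c(H_q) - q| ≤ C τ(q-1)` and `|s(H_q) - q(2q-1)| ≤ C τ(q-1)`,
where `τ(q-1)` is the number of positive divisors of `q-1`.  In particular `c(H_q) ∼ q` as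
`q → ∞`. -/
theorem cheb_Hq_asymptotics :
    (∃ C : ℝ, 0 ≤ C ∧ ∀ (F : Type) (_ : Field F) (_ : Fintype F),
      ∀ (Ω : Type) (_ : MeasurableSpace Ω) (P : Measure Ω) (X : ℕ → Ω → Hq F),
        IsChebSetup P X →
          |cheb P X - (Fintype.card F : ℝ)| ≤ C * ((Fintype.card F - 1).divisors.card : ℝ) ∧
          |scheb P X - (Fintype.card F : ℝ) * (2 * (Fintype.card F : ℝ) - 1)|
            ≤ C * ((Fintype.card F - 1).divisors.card : ℝ)) ∧
    ∀ ε : ℝ, 0 < ε → ∃ N : ℕ, ∀ (F : Type) (_ : Field F) (_ : Fintype F),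
      N ≤ Fintype.card F →
      ∀ (Ω : Type) (_ : MeasurableSpace Ω) (P : Measure Ω) (X : ℕ → Ω → Hq F),
        IsChebSetup P X → |cheb P X / (Fintype.card F : ℝ) - 1| < ε := by
  refine ⟨⟨6, by norm_num, fun F _ _ Ω _ P X hX => ⟨?_, Hq.abs_scheb_sub_le hX⟩⟩,
    fun ε hε => ⟨⌈32 / ε ^ 2⌉₊ + 1, fun F _ _ hN Ω _ P X hX => ?_⟩⟩
  · exact (Hq.abs_cheb_sub_card_le hX).trans (by gcongr; norm_num)
  refine abs_div_sub_one_lt hε ?_ ?_ (Hq.abs_cheb_sub_card_le hX)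
  · calc 32 / ε ^ 2 ≤ ⌈32 / ε ^ 2⌉₊ := Nat.le_ceil _
      _ < ⌈32 / ε ^ 2⌉₊ + 1 := lt_add_one _
      _ ≤ Fintype.card F := by exact_mod_cast hN
  · have := Nat.sq_card_divisors_le (Fintype.card F - 1)
    rw [Nat.sub_add_cancel Fintype.card_pos] at this
    exact_mod_cast this
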